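/- arXiv:2403.15697 — 2 statements merged into one kernel-verified Lean document; each statement's English description precedes it below -/
import Mathlib

section
/- Let P, Q be symmetric positive definite n×n matrices with Fᵀ P + P F = -Q, and let 0 < c < λ_min(Q)/2. Then for any ξ, w, v ∈ ℝⁿ, the quantity D := ξᵀP(Fξ + w - Hv) + (Fξ + w - Hv)ᵀPξ satisfies D ≤ -α (ξᵀPξ) + (‖P‖²/c)‖w‖² + (‖PH‖²/c)‖v‖², where α = (λ_min(Q)/λ_max(P))(1 - 2c/λ_min(Q)) > 0. -/
open scoped RealInnerProductSpace Matrix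

/-- The linear operator on Euclidean space induced by a real matrix. -/
noncomputable def matOp {m n : ℕ} (M : Matrix (Fin m) (Fin n) ℝ) :
    EuclideanSpace ℝ (Fin n) →L[ℝ] EuclideanSpace ℝ (Fin m) :=
  LinearMap.toContinuousLinearMap (Matrix.toEuclideanLin M)

/-- The induced 2-norm of a real matrix. -/
noncomputable def matNorm {m n : ℕ} (M : Matrix (Fin m) (Fin n) ℝ) : ℝ :=
  ‖matOp M‖

/-- The smallest eigenvalue of a symmetric positive definite matrix. -/
noncomputable def lamMin {n : ℕ} {Q : Matrix (Fin n) (Fin n) ℝ}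
    (hQ : Q.PosDef) : ℝ :=
  ⨅ i, hQ.isHermitian.eigenvalues i

/-- The largest eigenvalue of a symmetric positive definite matrix. -/
noncomputable def lamMax {n : ℕ} {P : Matrix (Fin n) (Fin n) ℝ}
    (hP : P.PosDef) : ℝ :=
  ⨆ i, hP.isHermitian.eigenvalues i

open Matrix

variable {n : ℕ}

lemma inner_eq_dot (x y : EuclideanSpace ℝ (Fin n)) :
    ⟪x, y⟫ = (WithLp.equiv 2 (Fin n → ℝ) x) ⬝ᵥ (WithLp.equiv 2 (Fin n → ℝ) y) := by
  simp [PiLp.inner_apply, dotProduct, mul_comm]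

lemma matOp_apply (M : Matrix (Fin n) (Fin n) ℝ) (x : EuclideanSpace ℝ (Fin n)) :
    matOp M x = (WithLp.equiv 2 (Fin n → ℝ)).symm (M *ᵥ (WithLp.equiv 2 (Fin n → ℝ) x)) := rfl

lemma inner_matOp (M : Matrix (Fin n) (Fin n) ℝ) (x y : EuclideanSpace ℝ (Fin n)) :
    ⟪x, matOp M y⟫ = (WithLp.equiv 2 (Fin n → ℝ) x) ⬝ᵥ (M *ᵥ (WithLp.equiv 2 (Fin n → ℝ) y)) := by
  rw [inner_eq_dot, matOp_apply]
  simp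

lemma matOp_mul (M N : Matrix (Fin n) (Fin n) ℝ) (x : EuclideanSpace ℝ (Fin n)) :
    matOp (M * N) x = matOp M (matOp N x) := by
  simp [matOp_apply, Matrix.mulVec_mulVec]

lemma inner_matOp_eq_sum {A : Matrix (Fin n) (Fin n) ℝ} (hA : A.IsHermitian)
    (x : EuclideanSpace ℝ (Fin n)) :
    ⟪x, matOp A x⟫ = ∑ i, hA.eigenvalues i * ⟪hA.eigenvectorBasis i, x⟫ ^ 2 := by
  rw [← (hA.eigenvectorBasis).sum_inner_mul_inner x (matOp A x)]
  refine Finset.sum_congr rfl fun i _ => ?_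
  have h1 : ⟪hA.eigenvectorBasis i, matOp A x⟫ = hA.eigenvalues i * ⟪hA.eigenvectorBasis i, x⟫ := by
    rw [inner_matOp, inner_eq_dot]
    have hAt : Aᵀ = A := by
      have := hA.eq
      rwa [conjTranspose_eq_transpose_of_trivial] at this
    calc (WithLp.equiv 2 (Fin n → ℝ) (hA.eigenvectorBasis i)) ⬝ᵥ (A *ᵥ (WithLp.equiv 2 (Fin n → ℝ) x))
        = (A *ᵥ (WithLp.equiv 2 (Fin n → ℝ) (hA.eigenvectorBasis i))) ⬝ᵥ (WithLp.equiv 2 (Fin n → ℝ) x) := by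
          rw [Matrix.dotProduct_mulVec]
          congr 1
          rw [← Matrix.mulVec_transpose, hAt]
      _ = hA.eigenvalues i * (WithLp.equiv 2 (Fin n → ℝ) (hA.eigenvectorBasis i)) ⬝ᵥ (WithLp.equiv 2 (Fin n → ℝ) x) := by
          simp only [WithLp.equiv_apply]
          rw [hA.mulVec_eigenvectorBasis]
          simp [smul_dotProduct]
  rw [h1, real_inner_comm x]
  ring

lemma norm_sq_eq_sum' {A : Matrix (Fin n) (Fin n) ℝ} (hA : A.IsHermitian)
    (x : EuclideanSpace ℝ (Fin n)) :
    ‖x‖ ^ 2 = ∑ i, ⟪hA.eigenvectorBasis i, x⟫ ^ 2 := by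
  rw [← real_inner_self_eq_norm_sq, ← (hA.eigenvectorBasis).sum_inner_mul_inner x x]
  refine Finset.sum_congr rfl fun i _ => ?_
  rw [real_inner_comm x]
  ring

lemma lamMin_le_inner [Nonempty (Fin n)] {Q : Matrix (Fin n) (Fin n) ℝ} (hQ : Q.PosDef)
    (x : EuclideanSpace ℝ (Fin n)) :
    lamMin hQ * ‖x‖ ^ 2 ≤ ⟪x, matOp Q x⟫ := by
  rw [inner_matOp_eq_sum hQ.isHermitian, norm_sq_eq_sum' hQ.isHermitian, Finset.mul_sum]
  refine Finset.sum_le_sum fun i _ => ?_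
  exact mul_le_mul_of_nonneg_right (ciInf_le (Set.Finite.bddBelow (Set.finite_range _)) i)
    (sq_nonneg _)

lemma inner_le_lamMax {P : Matrix (Fin n) (Fin n) ℝ} (hP : P.PosDef)
    (x : EuclideanSpace ℝ (Fin n)) :
    ⟪x, matOp P x⟫ ≤ lamMax hP * ‖x‖ ^ 2 := by
  cases isEmpty_or_nonempty (Fin n)
  · simp [inner_matOp_eq_sum hP.isHermitian, norm_sq_eq_sum' hP.isHermitian]
  rw [inner_matOp_eq_sum hP.isHermitian, norm_sq_eq_sum' hP.isHermitian, Finset.mul_sum]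
  refine Finset.sum_le_sum fun i _ => ?_
  exact mul_le_mul_of_nonneg_right (le_ciSup (Set.Finite.bddAbove (Set.finite_range _)) i)
    (sq_nonneg _)

lemma lamMin_pos [Nonempty (Fin n)] {Q : Matrix (Fin n) (Fin n) ℝ} (hQ : Q.PosDef) :
    0 < lamMin hQ := by
  obtain ⟨i, hi⟩ := exists_eq_ciInf_of_finite (f := fun i => hQ.isHermitian.eigenvalues i)
  rw [lamMin, ← hi]
  exact hQ.eigenvalues_pos i

lemma lamMax_pos [Nonempty (Fin n)] {P : Matrix (Fin n) (Fin n) ℝ} (hP : P.PosDef) :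
    0 < lamMax hP := by
  obtain ⟨i, hi⟩ := exists_eq_ciSup_of_finite (f := fun i => hP.isHermitian.eigenvalues i)
  rw [lamMax, ← hi]
  exact hP.eigenvalues_pos i

lemma young (c a b : ℝ) (hc : 0 < c) : 2 * a * b ≤ c * a ^ 2 + b ^ 2 / c := by
  have h : c * a ^ 2 + b ^ 2 / c - 2 * a * b = (c * a - b) ^ 2 / c := by
    field_simp; ring
  nlinarith [div_nonneg (sq_nonneg (c * a - b)) hc.le]

lemma norm_matOp_le (M : Matrix (Fin n) (Fin n) ℝ) (x : EuclideanSpace ℝ (Fin n)) :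
    ‖matOp M x‖ ≤ matNorm M * ‖x‖ := (matOp M).le_opNorm x

lemma matOp_adjoint {A : Matrix (Fin n) (Fin n) ℝ} (hA : A.IsHermitian)
    (x y : EuclideanSpace ℝ (Fin n)) : ⟪matOp A x, y⟫ = ⟪x, matOp A y⟫ := by
  have hAt : Aᵀ = A := by
    have := hA.eq; rwa [conjTranspose_eq_transpose_of_trivial] at this
  rw [real_inner_comm, inner_matOp, inner_matOp, Matrix.dotProduct_mulVec,
    ← Matrix.mulVec_transpose, hAt, dotProduct_comm]

/-- Key dissipation bound from Section III: with `FᵀP + PF = -Q` and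
`0 < c < λ_min(Q)/2`, the Lyapunov derivative along `ξ' = Fξ + w - Hv`
satisfies `D ≤ -α ξᵀPξ + (‖P‖²/c)‖w‖² + (‖PH‖²/c)‖v‖²`, where
`α = (λ_min(Q)/λ_max(P))(1 - 2c/λ_min(Q)) > 0`. -/
theorem lyap_dissipation_bound {n : ℕ}
    (P Q F H : Matrix (Fin n) (Fin n) ℝ)
    (hP : P.PosDef) (hQ : Q.PosDef)
    (hLyap : Fᵀ * P + P * F = -Q)
    (c : ℝ) (hc0 : 0 < c) (hc : c < lamMin hQ / 2)
    (ξ w v : EuclideanSpace ℝ (Fin n)) :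
    0 < (lamMin hQ / lamMax hP) * (1 - 2 * c / lamMin hQ) ∧
    ⟪ξ, matOp P (matOp F ξ + w - matOp H v)⟫ +
      ⟪matOp F ξ + w - matOp H v, matOp P ξ⟫ ≤
    -((lamMin hQ / lamMax hP) * (1 - 2 * c / lamMin hQ)) * ⟪ξ, matOp P ξ⟫ +
      (matNorm P ^ 2 / c) * ‖w‖ ^ 2 + (matNorm (P * H) ^ 2 / c) * ‖v‖ ^ 2 := by
  rcases Nat.eq_zero_or_pos n with hn | hn
  · exfalso
    subst hn
    have h0 : lamMin hQ = 0 := by rw [lamMin, Real.iInf_of_isEmpty]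
    rw [h0] at hc; linarith
  haveI : Nonempty (Fin n) := ⟨⟨0, hn⟩⟩
  have hlQ : 0 < lamMin hQ := lamMin_pos hQ
  have hlP : 0 < lamMax hP := lamMax_pos hP
  have h2c : 2 * c < lamMin hQ := by linarith
  have hα : 0 < (lamMin hQ / lamMax hP) * (1 - 2 * c / lamMin hQ) := by
    apply mul_pos (div_pos hlQ hlP)
    rw [sub_pos, div_lt_one hlQ]; exact h2c
  refine ⟨hα, ?_⟩
  have expand : ⟪ξ, matOp P (matOp F ξ + w - matOp H v)⟫ +
      ⟪matOp F ξ + w - matOp H v, matOp P ξ⟫ =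
      (⟪ξ, matOp P (matOp F ξ)⟫ + ⟪matOp F ξ, matOp P ξ⟫)
      + (⟪ξ, matOp P w⟫ + ⟪w, matOp P ξ⟫)
      - (⟪ξ, matOp P (matOp H v)⟫ + ⟪matOp H v, matOp P ξ⟫) := by
    rw [map_sub, map_add]
    rw [inner_sub_right, inner_add_right, inner_sub_left, inner_add_left]
    ring
  have key : ∀ x : Fin n → ℝ, x ⬝ᵥ ((P * F) *ᵥ x) + (F *ᵥ x) ⬝ᵥ (P *ᵥ x)
      = -(x ⬝ᵥ (Q *ᵥ x)) := by
    intro x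
    rw [← Matrix.vecMul_transpose F x, ← Matrix.dotProduct_mulVec,
      Matrix.mulVec_mulVec, ← dotProduct_add, ← Matrix.add_mulVec,
      add_comm (P * F), hLyap, Matrix.neg_mulVec, dotProduct_neg]
  have lyapterm : ⟪ξ, matOp P (matOp F ξ)⟫ + ⟪matOp F ξ, matOp P ξ⟫ = -⟪ξ, matOp Q ξ⟫ := by
    rw [← matOp_mul, inner_matOp, inner_eq_dot, inner_matOp]
    have e1 : (WithLp.equiv 2 (Fin n → ℝ)) (matOp F ξ) = F *ᵥ (WithLp.equiv 2 (Fin n → ℝ)) ξ := rfl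
    have e2 : (WithLp.equiv 2 (Fin n → ℝ)) (matOp P ξ) = P *ᵥ (WithLp.equiv 2 (Fin n → ℝ)) ξ := rfl
    rw [e1, e2]
    exact key _
  have cross1 : ⟪ξ, matOp P w⟫ + ⟪w, matOp P ξ⟫ ≤ 2 * (‖ξ‖ * (matNorm P * ‖w‖)) := by
    have h1 := real_inner_le_norm ξ (matOp P w)
    have h2 := real_inner_le_norm w (matOp P ξ)
    have h3 := norm_matOp_le P w
    have h4 := norm_matOp_le P ξ
    nlinarith [norm_nonneg ξ, norm_nonneg w, norm_nonneg (matOp P w), norm_nonneg (matOp P ξ)]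
  have eHv : ⟪matOp H v, matOp P ξ⟫ = ⟪ξ, matOp (P * H) v⟫ := by
    rw [← matOp_adjoint hP.isHermitian (matOp H v) ξ, real_inner_comm, ← matOp_mul]
  have cross2 : -(⟪ξ, matOp P (matOp H v)⟫ + ⟪matOp H v, matOp P ξ⟫) ≤
      2 * (‖ξ‖ * (matNorm (P * H) * ‖v‖)) := by
    rw [← matOp_mul, eHv]
    have h1 := abs_real_inner_le_norm ξ (matOp (P * H) v)
    have h2 := norm_matOp_le (P * H) v
    have h3 := neg_abs_le (⟪ξ, matOp (P * H) v⟫ : ℝ)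
    nlinarith [norm_nonneg ξ, norm_nonneg v]
  have y1 : 2 * (‖ξ‖ * (matNorm P * ‖w‖)) ≤ c * ‖ξ‖ ^ 2 + matNorm P ^ 2 / c * ‖w‖ ^ 2 := by
    have h := young c ‖ξ‖ (matNorm P * ‖w‖) hc0
    have e : (matNorm P * ‖w‖) ^ 2 / c = matNorm P ^ 2 / c * ‖w‖ ^ 2 := by ring
    linarith
  have y2 : 2 * (‖ξ‖ * (matNorm (P * H) * ‖v‖)) ≤
      c * ‖ξ‖ ^ 2 + matNorm (P * H) ^ 2 / c * ‖v‖ ^ 2 := by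
    have h := young c ‖ξ‖ (matNorm (P * H) * ‖v‖) hc0
    have e : (matNorm (P * H) * ‖v‖) ^ 2 / c = matNorm (P * H) ^ 2 / c * ‖v‖ ^ 2 := by ring
    linarith
  have pb : ⟪ξ, matOp P ξ⟫ ≤ lamMax hP * ‖ξ‖ ^ 2 := inner_le_lamMax hP ξ
  have qb : lamMin hQ * ‖ξ‖ ^ 2 ≤ ⟪ξ, matOp Q ξ⟫ := lamMin_le_inner hQ ξ
  have hmul := mul_le_mul_of_nonneg_left pb hα.le
  have e2 : (lamMin hQ / lamMax hP * (1 - 2 * c / lamMin hQ)) * (lamMax hP * ‖ξ‖ ^ 2)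
      = (lamMin hQ - 2 * c) * ‖ξ‖ ^ 2 := by
    field_simp
  rw [expand, lyapterm]
  linarith
end

section
/- Suppose e : [t_k, t_k+τ] → ℝⁿ is differentiable with e(t_k) = 0 and (d/dt)‖e(t)‖² ≤ 2σ r for all t, where σ > 0 and r = √(Ω/(γ + d c₂)) with Ω, γ, d, c₂ > 0. If ‖e(t_k + τ)‖ = r, then τ ≥ (1/(2σ)) √(Ω/(γ + d c₂)). -/
/-- MIET computation (Theorem 2): if the measurement error `e` satisfies
`e(t_k) = 0` and `(d/dt)‖e‖² ≤ 2σr` on `[t_k, t_k + τ]` with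
`r = √(Ω/(γ + d c₂))`, and `‖e(t_k + τ)‖ = r`, then
`τ ≥ (1/(2σ)) √(Ω/(γ + d c₂))`. -/
theorem miet_bound {n : ℕ} (σ Ω γ d c₂ : ℝ)
    (hσ : 0 < σ) (hΩ : 0 < Ω) (hγ : 0 < γ) (hd : 0 < d) (hc₂ : 0 < c₂)
    (tk τ : ℝ) (hτ : 0 ≤ τ)
    (e : ℝ → EuclideanSpace ℝ (Fin n)) (g : ℝ → ℝ)
    (hderiv : ∀ t ∈ Set.Icc tk (tk + τ), HasDerivAt (fun s => ‖e s‖ ^ 2) (g t) t)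
    (hg : ∀ t ∈ Set.Icc tk (tk + τ), g t ≤ 2 * σ * Real.sqrt (Ω / (γ + d * c₂)))
    (h0 : e tk = 0)
    (hr : ‖e (tk + τ)‖ = Real.sqrt (Ω / (γ + d * c₂))) :
    τ ≥ (1 / (2 * σ)) * Real.sqrt (Ω / (γ + d * c₂)) := by
  set r : ℝ := Real.sqrt (Ω / (γ + d * c₂)) with hrdef
  have hrpos : 0 < r := Real.sqrt_pos.mpr (div_pos hΩ (by positivity))
  set C : ℝ := 2 * σ * r with hC
  set f : ℝ → ℝ := fun s => ‖e s‖ ^ 2 - C * s with hf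
  have hdf : ∀ t ∈ Set.Icc tk (tk + τ), HasDerivAt f (g t - C) t := by
    intro t ht
    simpa [hf, Pi.sub_def] using (hderiv t ht).sub ((hasDerivAt_id t).const_mul C)
  have hanti : AntitoneOn f (Set.Icc tk (tk + τ)) := by
    apply antitoneOn_of_deriv_nonpos (convex_Icc _ _)
    · exact fun t ht => ((hdf t ht).differentiableAt).continuousAt.continuousWithinAt
    · intro t ht
      rw [interior_Icc] at ht
      exact ((hdf t (Set.mem_Icc_of_Ioo ht)).differentiableAt).differentiableWithinAt
    · intro t ht
      rw [interior_Icc] at ht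
      have ht' := Set.mem_Icc_of_Ioo ht
      rw [(hdf t ht').deriv]
      linarith [hg t ht']
  have h1 : f (tk + τ) ≤ f tk := by
    apply hanti (Set.left_mem_Icc.mpr (by linarith)) (Set.right_mem_Icc.mpr (by linarith))
    linarith
  have h2 : r ^ 2 ≤ C * τ := by
    simp only [hf, hr, h0, norm_zero] at h1
    ring_nf at h1 ⊢
    nlinarith
  have : r * r ≤ 2 * σ * r * τ := by nlinarith [sq_nonneg r]
  have hτge : r ≤ 2 * σ * τ := by
    have := (mul_le_mul_iff_of_pos_right hrpos).mp (by linarith : r * r ≤ (2 * σ * τ) * r)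
    linarith
  rw [ge_iff_le, div_mul_eq_mul_div, one_mul, div_le_iff₀ (by positivity)]
  linarith
end
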